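/- In the forcing P whose conditions are pairs (M, f) with M a finite ∈-increasing sequence of countable elementary substructures of H(ω₁) and f assigning to each non-top model a finite subset of the next model (ordered by coordinatewise extension), any two conditions p, q such that the models of p form an initial segment of the models of q below some model N ∈ M_q, with p ∈ N, have a common extension, namely s with M_s = M_p ∪ M_q, f_s extending f_p on M_p and f_q on M_q \ M_p. -/

import Mathlib

/-- A condition of the finite-condition club-adding forcing: a finite `∈`-increasing
sequence of models from the class `S` (the countable elementary substructures of
`H(ω₁)`), together with a function assigning to each model a finite set which, for a
non-top model, is a subset of the next model. -/
structure Cond (S : Set ZFSet) where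
  M : List ZFSet
  f : ZFSet → Set ZFSet
  hS : ∀ A ∈ M, A ∈ S
  hchain : M.Chain' (fun A B => A ∈ B)
  hfin : ∀ A ∈ M, (f A).Finite
  hnext : ∀ i : ℕ, (h : i + 1 < M.length) →
    f (M.get ⟨i, Nat.lt_of_succ_lt h⟩) ⊆ (M.get ⟨i + 1, h⟩).toSet

/-- The extension order: `q ≤ p` iff every model of `p` is a model of `q` and `f_q`
extends `f_p` on the models of `p`. -/
def Cond.Le {S : Set ZFSet} (q p : Cond S) : Prop :=
  (∀ A ∈ p.M, A ∈ q.M) ∧ ∀ A ∈ p.M, p.f A ⊆ q.f A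

/-!
Write `M_q = L ++ N :: T`. Membership is transitive along the models, so `M_q` is
`∈`-increasing throughout: `L` consists of the models of `q` lying in `N` (hence of models of
`r`), every model in `T` contains `N`, and by well-foundedness of `∈` no model of `N :: T` is a
model of `r`. The amalgam has models `M_r ++ N :: T`, with `f_r` on `M_r` and `f_q` elsewhere;
the only new link, from the top model of `r` to `N`, holds because the values of `r` lie in `N`.
-/

theorem List.pairwise_mem_of_isChain {S : Set ZFSet}
    (hStrans : ∀ A B : ZFSet, A ∈ S → B ∈ S → A ∈ B → A.toSet ⊆ B.toSet)
    {L : List ZFSet} (hS : ∀ A ∈ L, A ∈ S) (hL : L.IsChain (· ∈ ·)) : L.Pairwise (· ∈ ·) := by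
  let R : ZFSet → ZFSet → Prop := fun A B => A ∈ S ∧ B ∈ S ∧ A ∈ B
  have : Trans R R R :=
    ⟨fun ⟨hA, hB, hAB⟩ ⟨_, hC, hBC⟩ => ⟨hA, hC, hStrans _ _ hB hC hBC hAB⟩⟩
  have hR : L.IsChain R :=
    (List.IsChain.iff_mem.mp hL).imp fun A B ⟨hA, hB, hAB⟩ => ⟨hS A hA, hS B hB, hAB⟩
  exact hR.pairwise.imp fun h => h.2.2

theorem ZFSet.notMem_of_mem_cons {M T : List ZFSet} {N B : ZFSet}
    (hM : ∀ A ∈ M, A ∈ N) (hT : ∀ C ∈ T, N ∈ C) (hB : B ∈ N :: T) : B ∉ M := by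
  intro hBM
  rcases List.mem_cons.mp hB with rfl | hBT
  · exact ZFSet.mem_irrefl B (hM B hBM)
  · exact ZFSet.mem_asymm (hT B hBT) (hM B hBM)

namespace Cond

variable {S : Set ZFSet}

theorem pairwise_mem (hStrans : ∀ A B : ZFSet, A ∈ S → B ∈ S → A ∈ B → A.toSet ⊆ B.toSet)
    (p : Cond S) : p.M.Pairwise (· ∈ ·) :=
  List.pairwise_mem_of_isChain hStrans p.hS p.hchain

theorem isChain_f_subset (p : Cond S) : p.M.IsChain (fun A B => p.f A ⊆ B.toSet) :=
  List.isChain_iff_getElem.mpr fun i h => by simpa using p.hnext i h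

theorem mem_of_mem_prefix (hStrans : ∀ A B : ZFSet, A ∈ S → B ∈ S → A ∈ B → A.toSet ⊆ B.toSet)
    {q : Cond S} {L T : List ZFSet} {N A : ZFSet} (hq : q.M = L ++ N :: T) (hA : A ∈ L) :
    A ∈ N := by
  have hpw := q.pairwise_mem hStrans
  rw [hq, List.pairwise_append] at hpw
  exact hpw.2.2 A hA N List.mem_cons_self

theorem mem_of_mem_suffix (hStrans : ∀ A B : ZFSet, A ∈ S → B ∈ S → A ∈ B → A.toSet ⊆ B.toSet)
    {q : Cond S} {L T : List ZFSet} {N B : ZFSet} (hq : q.M = L ++ N :: T) (hB : B ∈ T) :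
    N ∈ B := by
  have hpw := q.pairwise_mem hStrans
  rw [hq, List.pairwise_append, List.pairwise_cons] at hpw
  exact hpw.2.1.1 B hB

open Classical in
def glueFun (r q : Cond S) : ZFSet → Set ZFSet :=
  fun A => if A ∈ r.M then r.f A else q.f A

theorem glueFun_of_mem (r q : Cond S) {A : ZFSet} (hA : A ∈ r.M) : glueFun r q A = r.f A :=
  if_pos hA

theorem glueFun_of_notMem (r q : Cond S) {A : ZFSet} (hA : A ∉ r.M) :
    glueFun r q A = q.f A :=
  if_neg hA

def glue (hStrans : ∀ A B : ZFSet, A ∈ S → B ∈ S → A ∈ B → A.toSet ⊆ B.toSet)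
    (r q : Cond S) {L T : List ZFSet} {N : ZFSet} (hq : q.M = L ++ N :: T)
    (hrN : ∀ A ∈ r.M, A ∈ N) (hrvN : ∀ A ∈ r.M, r.f A ⊆ N.toSet) : Cond S where
  M := r.M ++ N :: T
  f := glueFun r q
  hS A hA := by
    rcases List.mem_append.mp hA with hA | hA
    · exact r.hS A hA
    · exact q.hS A (hq ▸ List.mem_append_right L hA)
  hchain := by
    refine (List.pairwise_append.mpr ⟨r.pairwise_mem hStrans, ?_, ?_⟩).isChain
    · exact (hq ▸ q.pairwise_mem hStrans).sublist (List.sublist_append_right L _)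
    · intro A hA B hB
      rcases List.mem_cons.mp hB with rfl | hBT
      · exact hrN A hA
      · exact hStrans _ _ (q.hS _ (by simp [hq])) (q.hS _ (by simp [hq, hBT]))
          (mem_of_mem_suffix hStrans hq hBT) (hrN A hA)
  hfin A hA := by
    by_cases hAr : A ∈ r.M
    · rw [glueFun_of_mem r q hAr]; exact r.hfin A hAr
    · rw [glueFun_of_notMem r q hAr]
      exact q.hfin A (hq ▸ List.mem_append_right L ((List.mem_append.mp hA).resolve_left hAr))
  hnext := by
    have hc : (r.M ++ N :: T).IsChain (fun A B => glueFun r q A ⊆ B.toSet) := by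
      refine List.isChain_append.mpr ⟨?_, ?_, ?_⟩
      · exact (List.IsChain.iff_mem.mp r.isChain_f_subset).imp
          fun A B ⟨hA, _, hAB⟩ => by rwa [glueFun_of_mem r q hA]
      · have hqc := (hq ▸ q.isChain_f_subset).right_of_append
        refine (List.IsChain.iff_mem.mp hqc).imp fun A B ⟨hA, _, hAB⟩ => ?_
        rwa [glueFun_of_notMem r q (ZFSet.notMem_of_mem_cons hrN
          (fun _ => mem_of_mem_suffix hStrans hq) hA)]
      · intro A hA B hB
        obtain rfl : N = B := by simpa using hB
        rw [glueFun_of_mem r q (List.mem_of_getLast? hA)]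
        exact hrvN A (List.mem_of_getLast? hA)
    exact fun i h => by simpa using List.isChain_iff_getElem.mp hc i h

theorem mem_glue_M_iff (hStrans : ∀ A B : ZFSet, A ∈ S → B ∈ S → A ∈ B → A.toSet ⊆ B.toSet)
    {r q : Cond S} {L T : List ZFSet} {N : ZFSet} (hq : q.M = L ++ N :: T)
    (hrN : ∀ A ∈ r.M, A ∈ N) (hrvN : ∀ A ∈ r.M, r.f A ⊆ N.toSet)
    (hrq : ∀ A ∈ q.M, A ∈ N → A ∈ r.M) (A : ZFSet) :
    A ∈ (glue hStrans r q hq hrN hrvN).M ↔ A ∈ r.M ∨ A ∈ q.M := by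
  simp only [glue, List.mem_append]
  constructor
  · exact Or.imp_right fun hA => hq ▸ List.mem_append_right L hA
  · rintro (hA | hA)
    · exact .inl hA
    · rcases List.mem_append.mp (hq ▸ hA) with hAL | hAT
      · exact .inl (hrq A hA (mem_of_mem_prefix hStrans hq hAL))
      · exact .inr hAT

end Cond

theorem stmt_16_general (S : Set ZFSet)
    (hStrans : ∀ A B : ZFSet, A ∈ S → B ∈ S → A ∈ B → A.toSet ⊆ B.toSet)
    (q r : Cond S) (N : ZFSet) (hN : N ∈ q.M)
    (hrN : ∀ A ∈ r.M, A ∈ N)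
    (hrvN : ∀ A ∈ r.M, r.f A ⊆ N.toSet)
    (hrq : ∀ A ∈ q.M, A ∈ N → A ∈ r.M)
    (hrqf : ∀ A ∈ q.M, A ∈ N → q.f A ⊆ r.f A) :
    ∃ s : Cond S,
      (∀ A : ZFSet, A ∈ s.M ↔ (A ∈ r.M ∨ A ∈ q.M)) ∧
      (∀ A ∈ r.M, s.f A = r.f A) ∧
      (∀ A ∈ q.M, A ∉ r.M → s.f A = q.f A) ∧
      s.Le r ∧ s.Le q := by
  obtain ⟨L, T, hq⟩ := List.append_of_mem hN
  let s := Cond.glue hStrans r q hq hrN hrvN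
  have hmem : ∀ A, A ∈ s.M ↔ A ∈ r.M ∨ A ∈ q.M := Cond.mem_glue_M_iff hStrans hq hrN hrvN hrq
  have hfr : ∀ A ∈ r.M, s.f A = r.f A := fun A => Cond.glueFun_of_mem r q
  have hfq : ∀ A ∈ q.M, A ∉ r.M → s.f A = q.f A := fun A _ => Cond.glueFun_of_notMem r q
  refine ⟨s, hmem, hfr, hfq, ⟨fun A hA => (hmem A).mpr (.inl hA), fun A hA => (hfr A hA).ge⟩,
    ⟨fun A hA => (hmem A).mpr (.inr hA), fun A hA => ?_⟩⟩
  by_cases hAr : A ∈ r.M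
  · rw [hfr A hAr]
    exact hrqf A hA (hrN A hAr)
  · rw [hfq A hA hAr]

/-- Amalgamation for the finite-condition forcing: suppose the models in `S` are
countable elementary substructures of `H(ω₁)`, so membership implies inclusion among
them. Let `q` be a condition, `N` a model of `q` such that the models of `q` lying in
`N` are exactly those appearing before `N`, and let `r` be a condition all of whose
models and assigned values lie in `N`, extending the restriction of `q` to `N`.
Then there is a common extension `s` of `r` and `q` whose models are exactly those of
`r` together with those of `q`, with `f_s = f_r` on the models of `r` and `f_s = f_q`
on the models of `q` not among those of `r`. -/
theorem stmt_16 (S : Set ZFSet)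
    (hStrans : ∀ A B : ZFSet, A ∈ S → B ∈ S → A ∈ B → A.toSet ⊆ B.toSet)
    (q r : Cond S) (N : ZFSet) (hN : N ∈ q.M)
    (hinit : ∀ A ∈ q.M, (A ∈ N ↔ ∃ i j : Fin q.M.length,
      i < j ∧ q.M.get i = A ∧ q.M.get j = N))
    (hrN : ∀ A ∈ r.M, A ∈ N)
    (hrvN : ∀ A ∈ r.M, r.f A ⊆ N.toSet)
    (hrq : ∀ A ∈ q.M, A ∈ N → A ∈ r.M)
    (hrqf : ∀ A ∈ q.M, A ∈ N → q.f A ⊆ r.f A) :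
    ∃ s : Cond S,
      (∀ A : ZFSet, A ∈ s.M ↔ (A ∈ r.M ∨ A ∈ q.M)) ∧
      (∀ A ∈ r.M, s.f A = r.f A) ∧
      (∀ A ∈ q.M, A ∉ r.M → s.f A = q.f A) ∧
      s.Le r ∧ s.Le q :=
  stmt_16_general S hStrans q r N hN hrN hrvN hrq hrqf
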